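/- arXiv:2204.01121 — 2 statements merged into one kernel-verified Lean document; each statement's English description precedes it below -/
import Mathlib

section
/- Let Ω ⊂ ℂ² be a bounded domain containing the origin and satisfying (H1) and (H2). Let w¹ = (w¹_1, w¹_2) and w² = (w²_1, w²_2) be pairs of bounded smooth functions Ω → ℂ such that: (i) ∂w¹_1/∂z̄_2 = ∂w¹_2/∂z̄_1 and ∂w²_1/∂z̄_2 = ∂w²_2/∂z̄_1 on Ω; (ii) z_1 w¹_k + z_2 w²_k = 0 on Ω for k = 1, 2; (iii) there is ε > 0 such that w¹_k and w²_k vanish on the set {z ∈ Ω : |z| < ε}. Then there exists a bounded smooth function H : Ω → ℂ such that w¹_k = −z_2 ∂H/∂z̄_k and w²_k = z_1 ∂H/∂z̄_k on Ω for k = 1, 2. -/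
/-!
Off the origin, multiplication by `z̄ / |z|²` splits `τ(a, b) = z₁ a + z₂ b`: if `τ(w¹ₖ, w²ₖ) = 0`
then `gₖ = (z̄₁ w²ₖ - z̄₂ w¹ₖ) / |z|²` satisfies `w¹ₖ = -z₂ gₖ` and `w²ₖ = z₁ gₖ`. Since the `wᵢₖ`
vanish near the origin, so do the `gₖ`, which are therefore smooth, and bounded by `O(1/ε)`.
As `∂̄` commutes with multiplication by the holomorphic coordinates and one of them is invertible
at each point `z ≠ 0`, the closedness of `w¹` and `w²` makes `(g₀, g₁)` `∂̄`-closed, and (H1)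
gives `H` with `∂̄H = g`.
-/

/-- The Wirtinger derivative `∂f/∂z̄₁` of `f : ℂ² → ℂ` at `z`:
`(1/2)(∂f/∂x₁ + i ∂f/∂y₁)`, computed from the real Fréchet derivative. -/
noncomputable def d1bar (f : ℂ × ℂ → ℂ) (z : ℂ × ℂ) : ℂ :=
  (1 / 2) * (fderiv ℝ f z (1, 0) + Complex.I * fderiv ℝ f z (Complex.I, 0))

/-- The Wirtinger derivative `∂f/∂z̄₂` of `f : ℂ² → ℂ` at `z`:
`(1/2)(∂f/∂x₂ + i ∂f/∂y₂)`, computed from the real Fréchet derivative. -/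
noncomputable def d2bar (f : ℂ × ℂ → ℂ) (z : ℂ × ℂ) : ℂ :=
  (1 / 2) * (fderiv ℝ f z (0, 1) + Complex.I * fderiv ℝ f z (0, Complex.I))

/-- `f` is bounded on `Ω` and smooth (in the underlying real variables) on `Ω`. -/
def BddSmoothOn (Ω : Set (ℂ × ℂ)) (f : ℂ × ℂ → ℂ) : Prop :=
  ContDiffOn ℝ (⊤ : ℕ∞) f Ω ∧ ∃ C, ∀ z ∈ Ω, ‖f z‖ ≤ C

/-- Hypothesis (H1): every `∂̄`-closed bounded smooth `(0,1)`-form on `Ω` is `∂̄u` for a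
bounded smooth function `u`. -/
def H1 (Ω : Set (ℂ × ℂ)) : Prop :=
  ∀ β₁ β₂ : ℂ × ℂ → ℂ, BddSmoothOn Ω β₁ → BddSmoothOn Ω β₂ →
    (∀ z ∈ Ω, d2bar β₁ z = d1bar β₂ z) →
    ∃ u : ℂ × ℂ → ℂ, BddSmoothOn Ω u ∧
      (∀ z ∈ Ω, d1bar u z = β₁ z) ∧ (∀ z ∈ Ω, d2bar u z = β₂ z)

/-- Hypothesis (H2): every bounded smooth `(0,2)`-form on `Ω` is `∂̄` of a bounded smooth
`(0,1)`-form. -/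
def H2 (Ω : Set (ℂ × ℂ)) : Prop :=
  ∀ β : ℂ × ℂ → ℂ, BddSmoothOn Ω β →
    ∃ u₁ u₂ : ℂ × ℂ → ℂ, BddSmoothOn Ω u₁ ∧ BddSmoothOn Ω u₂ ∧
      ∀ z ∈ Ω, d1bar u₂ z - d2bar u₁ z = β z

open ComplexConjugate Filter Topology

theorem fderiv_real_apply_I_smul {E : Type*} [NormedAddCommGroup E] [NormedSpace ℂ E]
    {h : E → ℂ} {z : E} (hh : DifferentiableAt ℂ h z) (v : E) :
    fderiv ℝ h z (Complex.I • v) = Complex.I * fderiv ℝ h z v := by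
  rw [hh.fderiv_restrictScalars ℝ, ContinuousLinearMap.coe_restrictScalars', map_smul,
    smul_eq_mul]

/-- The directional `∂̄`-operator `f ↦ Df(v) + i Df(iv)` is linear over holomorphic functions. -/
theorem fderiv_mul_add_I_mul_fderiv_mul {E : Type*} [NormedAddCommGroup E] [NormedSpace ℂ E]
    {h f : E → ℂ} {z : E} (hh : DifferentiableAt ℂ h z) (hf : DifferentiableAt ℝ f z) (v : E) :
    fderiv ℝ (fun w => h w * f w) z v
        + Complex.I * fderiv ℝ (fun w => h w * f w) z (Complex.I • v)
      = h z * (fderiv ℝ f z v + Complex.I * fderiv ℝ f z (Complex.I • v)) := by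
  rw [fderiv_fun_mul (hh.restrictScalars ℝ) hf]
  simp only [add_apply, smul_apply, smul_eq_mul,
    fderiv_real_apply_I_smul hh]
  linear_combination (f z * fderiv ℝ h z v) * Complex.I_mul_I

theorem d1bar_mul {h f : ℂ × ℂ → ℂ} {z : ℂ × ℂ} (hh : DifferentiableAt ℂ h z)
    (hf : DifferentiableAt ℝ f z) : d1bar (fun w => h w * f w) z = h z * d1bar f z := by
  have key := fderiv_mul_add_I_mul_fderiv_mul hh hf (1, 0)
  simp only [Prod.smul_mk, smul_eq_mul, mul_one, mul_zero] at key
  rw [d1bar, d1bar, key]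
  ring

theorem d2bar_mul {h f : ℂ × ℂ → ℂ} {z : ℂ × ℂ} (hh : DifferentiableAt ℂ h z)
    (hf : DifferentiableAt ℝ f z) : d2bar (fun w => h w * f w) z = h z * d2bar f z := by
  have key := fderiv_mul_add_I_mul_fderiv_mul hh hf (0, 1)
  simp only [Prod.smul_mk, smul_eq_mul, mul_one, mul_zero] at key
  rw [d2bar, d2bar, key]
  ring

theorem Filter.EventuallyEq.d1bar_eq {f g : ℂ × ℂ → ℂ} {z : ℂ × ℂ} (h : f =ᶠ[𝓝 z] g) :
    d1bar f z = d1bar g z := by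
  rw [d1bar, d1bar, h.fderiv_eq]

theorem Filter.EventuallyEq.d2bar_eq {f g : ℂ × ℂ → ℂ} {z : ℂ × ℂ} (h : f =ᶠ[𝓝 z] g) :
    d2bar f z = d2bar g z := by
  rw [d2bar, d2bar, h.fderiv_eq]

theorem d1bar_zero (z : ℂ × ℂ) : d1bar 0 z = 0 := by
  simp [d1bar]

theorem d2bar_zero (z : ℂ × ℂ) : d2bar 0 z = 0 := by
  simp [d2bar]

/-- Away from the origin one of the coordinates is invertible, and `∂̄` commutes with both. -/
theorem d2bar_eq_d1bar_of_ne_zero {g₀ g₁ : ℂ × ℂ → ℂ} {z : ℂ × ℂ} (hz : z ≠ 0)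
    (hg₀ : DifferentiableAt ℝ g₀ z) (hg₁ : DifferentiableAt ℝ g₁ z)
    (hfst : d2bar (fun w => w.1 * g₀ w) z = d1bar (fun w => w.1 * g₁ w) z)
    (hsnd : d2bar (fun w => -w.2 * g₀ w) z = d1bar (fun w => -w.2 * g₁ w) z) :
    d2bar g₀ z = d1bar g₁ z := by
  rw [d2bar_mul (by fun_prop) hg₀, d1bar_mul (by fun_prop) hg₁] at hfst hsnd
  by_cases h₁ : z.1 = 0
  · have h₂ : -z.2 ≠ 0 := neg_ne_zero.2 fun h₂ => hz (Prod.ext h₁ h₂)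
    exact mul_left_cancel₀ h₂ hsnd
  · exact mul_left_cancel₀ h₁ hfst

theorem sq_norm_fst_add_sq_norm_snd_pos {z : ℂ × ℂ} (hz : z ≠ 0) : 0 < ‖z.1‖ ^ 2 + ‖z.2‖ ^ 2 := by
  rcases z with ⟨z₁, z₂⟩
  simp only [ne_eq, Prod.mk_eq_zero, not_and_or] at hz
  rcases hz with h | h <;> positivity

theorem ofReal_sq_norm_fst_add_sq_norm_snd (z : ℂ × ℂ) :
    ((‖z.1‖ ^ 2 + ‖z.2‖ ^ 2 : ℝ) : ℂ) = z.1 * conj z.1 + z.2 * conj z.2 := by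
  push_cast
  rw [Complex.mul_conj', Complex.mul_conj']

theorem contDiffAt_inv_sq_norm_fst_add_sq_norm_snd {z : ℂ × ℂ} (hz : z ≠ 0) :
    ContDiffAt ℝ (⊤ : ℕ∞) (fun w : ℂ × ℂ => ((‖w.1‖ ^ 2 + ‖w.2‖ ^ 2 : ℝ) : ℂ)⁻¹) z := by
  refine ContDiffAt.inv ?_ (Complex.ofReal_ne_zero.2 (sq_norm_fst_add_sq_norm_snd_pos hz).ne')
  exact (Complex.ofRealCLM.contDiff.comp
    (((contDiff_norm_sq ℝ).comp contDiff_fst).add ((contDiff_norm_sq ℝ).comp contDiff_snd))).contDiffAt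

noncomputable def koszulQuotient (a b : ℂ × ℂ → ℂ) (z : ℂ × ℂ) : ℂ :=
  (conj z.1 * b z - conj z.2 * a z) / ((‖z.1‖ ^ 2 + ‖z.2‖ ^ 2 : ℝ) : ℂ)

section koszulQuotient

variable {Ω : Set (ℂ × ℂ)} {a b : ℂ × ℂ → ℂ} {ε : ℝ}

theorem koszulQuotient_eventuallyEq_zero (hε : 0 < ε)
    (hvan : ∀ z ∈ Ω, ‖z.1‖ ^ 2 + ‖z.2‖ ^ 2 < ε ^ 2 → a z = 0 ∧ b z = 0) :
    koszulQuotient a b =ᶠ[𝓝[Ω] 0] 0 := by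
  have hball : {z : ℂ × ℂ | ‖z.1‖ ^ 2 + ‖z.2‖ ^ 2 < ε ^ 2} ∈ 𝓝 0 :=
    (isOpen_lt (by fun_prop) continuous_const).mem_nhds (by simpa using pow_pos hε 2)
  filter_upwards [mem_nhdsWithin_of_mem_nhds hball, self_mem_nhdsWithin] with z hz hzΩ
  obtain ⟨ha, hb⟩ := hvan z hzΩ hz
  simp [koszulQuotient, ha, hb]

theorem fst_mul_koszulQuotient (hε : 0 < ε) (hτ : ∀ z ∈ Ω, z.1 * a z + z.2 * b z = 0)
    (hvan : ∀ z ∈ Ω, ‖z.1‖ ^ 2 + ‖z.2‖ ^ 2 < ε ^ 2 → a z = 0 ∧ b z = 0) {z : ℂ × ℂ}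
    (hz : z ∈ Ω) : z.1 * koszulQuotient a b z = b z := by
  rcases eq_or_ne z 0 with rfl | hz0
  · simp [(hvan 0 hz (by simpa using pow_pos hε 2)).2]
  have hr : ((‖z.1‖ ^ 2 + ‖z.2‖ ^ 2 : ℝ) : ℂ) ≠ 0 :=
    Complex.ofReal_ne_zero.2 (sq_norm_fst_add_sq_norm_snd_pos hz0).ne'
  rw [koszulQuotient, mul_div_assoc', div_eq_iff hr, ofReal_sq_norm_fst_add_sq_norm_snd]
  linear_combination (-conj z.2) * hτ z hz

theorem neg_snd_mul_koszulQuotient (hε : 0 < ε) (hτ : ∀ z ∈ Ω, z.1 * a z + z.2 * b z = 0)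
    (hvan : ∀ z ∈ Ω, ‖z.1‖ ^ 2 + ‖z.2‖ ^ 2 < ε ^ 2 → a z = 0 ∧ b z = 0) {z : ℂ × ℂ}
    (hz : z ∈ Ω) : -z.2 * koszulQuotient a b z = a z := by
  rcases eq_or_ne z 0 with rfl | hz0
  · simp [(hvan 0 hz (by simpa using pow_pos hε 2)).1]
  have hr : ((‖z.1‖ ^ 2 + ‖z.2‖ ^ 2 : ℝ) : ℂ) ≠ 0 :=
    Complex.ofReal_ne_zero.2 (sq_norm_fst_add_sq_norm_snd_pos hz0).ne'
  rw [koszulQuotient, mul_div_assoc', div_eq_iff hr, ofReal_sq_norm_fst_add_sq_norm_snd]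
  linear_combination (-conj z.1) * hτ z hz

theorem contDiffOn_koszulQuotient (hε : 0 < ε)
    (hvan : ∀ z ∈ Ω, ‖z.1‖ ^ 2 + ‖z.2‖ ^ 2 < ε ^ 2 → a z = 0 ∧ b z = 0)
    (ha : ContDiffOn ℝ (⊤ : ℕ∞) a Ω) (hb : ContDiffOn ℝ (⊤ : ℕ∞) b Ω) :
    ContDiffOn ℝ (⊤ : ℕ∞) (koszulQuotient a b) Ω := by
  intro z hz
  rcases eq_or_ne z 0 with rfl | hz0
  · have hzero := koszulQuotient_eventuallyEq_zero hε hvan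
    exact contDiffWithinAt_const.congr_of_eventuallyEq hzero (hzero.eq_of_nhdsWithin hz)
  have hconj₁ : ContDiff ℝ (⊤ : ℕ∞) (fun w : ℂ × ℂ => conj w.1) :=
    Complex.conjCLE.contDiff.comp contDiff_fst
  have hconj₂ : ContDiff ℝ (⊤ : ℕ∞) (fun w : ℂ × ℂ => conj w.2) :=
    Complex.conjCLE.contDiff.comp contDiff_snd
  unfold koszulQuotient
  simp only [div_eq_mul_inv]
  exact ((hconj₁.contDiffWithinAt.mul (hb z hz)).sub (hconj₂.contDiffWithinAt.mul (ha z hz))).mul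
    (contDiffAt_inv_sq_norm_fst_add_sq_norm_snd hz0).contDiffWithinAt

theorem exists_norm_koszulQuotient_le (hε : 0 < ε)
    (hvan : ∀ z ∈ Ω, ‖z.1‖ ^ 2 + ‖z.2‖ ^ 2 < ε ^ 2 → a z = 0 ∧ b z = 0)
    (ha : ∃ A, ∀ z ∈ Ω, ‖a z‖ ≤ A) (hb : ∃ B, ∀ z ∈ Ω, ‖b z‖ ≤ B) :
    ∃ C, ∀ z ∈ Ω, ‖koszulQuotient a b z‖ ≤ C := by
  obtain ⟨A, hA⟩ := ha
  obtain ⟨B, hB⟩ := hb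
  refine ⟨2 * (A + B) / ε, fun z hz => ?_⟩
  have hA₀ : 0 ≤ A := (norm_nonneg _).trans (hA z hz)
  have hB₀ : 0 ≤ B := (norm_nonneg _).trans (hB z hz)
  by_cases hsmall : ‖z.1‖ ^ 2 + ‖z.2‖ ^ 2 < ε ^ 2
  · obtain ⟨ha₀, hb₀⟩ := hvan z hz hsmall
    simp only [koszulQuotient, ha₀, hb₀, mul_zero, sub_zero, zero_div, norm_zero]
    positivity
  rw [not_lt] at hsmall
  set x := ‖z.1‖
  set y := ‖z.2‖
  have hr : 0 < x ^ 2 + y ^ 2 := (pow_pos hε 2).trans_le hsmall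
  have hnum : ‖conj z.1 * b z - conj z.2 * a z‖ ≤ x * B + y * A :=
    calc ‖conj z.1 * b z - conj z.2 * a z‖ ≤ ‖conj z.1 * b z‖ + ‖conj z.2 * a z‖ := norm_sub_le _ _
      _ = x * ‖b z‖ + y * ‖a z‖ := by simp only [norm_mul, Complex.norm_conj, x, y]
      _ ≤ x * B + y * A := by gcongr <;> simp only [hA, hB, hz]
  have hxy : (x + y) * ε ≤ 2 * (x ^ 2 + y ^ 2) := by
    nlinarith [sq_nonneg (x + y - ε), sq_nonneg (x - y)]
  rw [koszulQuotient, norm_div, Complex.norm_of_nonneg hr.le, div_le_div_iff₀ hr hε]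
  calc ‖conj z.1 * b z - conj z.2 * a z‖ * ε ≤ (x * B + y * A) * ε := by gcongr
    _ ≤ (x + y) * ε * (A + B) := by
      have hxA : 0 ≤ x * A * ε := by positivity
      have hyB : 0 ≤ y * B * ε := by positivity
      linarith
    _ ≤ 2 * (x ^ 2 + y ^ 2) * (A + B) := by gcongr
    _ = 2 * (A + B) * (x ^ 2 + y ^ 2) := by ring

theorem bddSmoothOn_koszulQuotient (hε : 0 < ε)
    (hvan : ∀ z ∈ Ω, ‖z.1‖ ^ 2 + ‖z.2‖ ^ 2 < ε ^ 2 → a z = 0 ∧ b z = 0)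
    (ha : BddSmoothOn Ω a) (hb : BddSmoothOn Ω b) : BddSmoothOn Ω (koszulQuotient a b) :=
  ⟨contDiffOn_koszulQuotient hε hvan ha.1 hb.1, exists_norm_koszulQuotient_le hε hvan ha.2 hb.2⟩

theorem d2bar_koszulQuotient_eq_d1bar (hΩ : IsOpen Ω) (hε : 0 < ε) {a b : Fin 2 → ℂ × ℂ → ℂ}
    (ha : ∀ k, ContDiffOn ℝ (⊤ : ℕ∞) (a k) Ω) (hb : ∀ k, ContDiffOn ℝ (⊤ : ℕ∞) (b k) Ω)
    (hτ : ∀ k, ∀ z ∈ Ω, z.1 * a k z + z.2 * b k z = 0)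
    (hvan : ∀ k, ∀ z ∈ Ω, ‖z.1‖ ^ 2 + ‖z.2‖ ^ 2 < ε ^ 2 → a k z = 0 ∧ b k z = 0)
    (hacl : ∀ z ∈ Ω, d2bar (a 0) z = d1bar (a 1) z)
    (hbcl : ∀ z ∈ Ω, d2bar (b 0) z = d1bar (b 1) z) {z : ℂ × ℂ} (hz : z ∈ Ω) :
    d2bar (koszulQuotient (a 0) (b 0)) z = d1bar (koszulQuotient (a 1) (b 1)) z := by
  rcases eq_or_ne z 0 with rfl | hz0
  · have hzero k : koszulQuotient (a k) (b k) =ᶠ[𝓝 0] 0 :=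
      hΩ.nhdsWithin_eq hz ▸ koszulQuotient_eventuallyEq_zero hε (hvan k)
    rw [(hzero 0).d2bar_eq, (hzero 1).d1bar_eq, d2bar_zero, d1bar_zero]
  have hdiff k : DifferentiableAt ℝ (koszulQuotient (a k) (b k)) z :=
    ((contDiffOn_koszulQuotient hε (hvan k) (ha k) (hb k)).contDiffAt
      (hΩ.mem_nhds hz)).differentiableAt (by simp)
  have hfst k : (fun w => w.1 * koszulQuotient (a k) (b k) w) =ᶠ[𝓝 z] b k :=
    eventually_of_mem (hΩ.mem_nhds hz) fun w hw => fst_mul_koszulQuotient hε (hτ k) (hvan k) hw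
  have hsnd k : (fun w => -w.2 * koszulQuotient (a k) (b k) w) =ᶠ[𝓝 z] a k :=
    eventually_of_mem (hΩ.mem_nhds hz) fun w hw =>
      neg_snd_mul_koszulQuotient hε (hτ k) (hvan k) hw
  refine d2bar_eq_d1bar_of_ne_zero hz0 (hdiff 0) (hdiff 1) ?_ ?_
  · rw [(hfst 0).d2bar_eq, (hfst 1).d1bar_eq, hbcl z hz]
  · rw [(hsnd 0).d2bar_eq, (hsnd 1).d1bar_eq, hacl z hz]

end koszulQuotient

theorem koszul_dim_two_Linf_general (Ω : Set (ℂ × ℂ))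
    (hopen : IsOpen Ω) (h1 : H1 Ω)
    (w1 w2 : Fin 2 → ℂ × ℂ → ℂ)
    (hw1sm : ∀ k, BddSmoothOn Ω (w1 k)) (hw2sm : ∀ k, BddSmoothOn Ω (w2 k))
    (hw1cl : ∀ z ∈ Ω, d2bar (w1 0) z = d1bar (w1 1) z)
    (hw2cl : ∀ z ∈ Ω, d2bar (w2 0) z = d1bar (w2 1) z)
    (htau : ∀ k, ∀ z ∈ Ω, z.1 * w1 k z + z.2 * w2 k z = 0)
    (hsupp : ∃ ε > 0, ∀ k, ∀ z ∈ Ω, ‖z.1‖ ^ 2 + ‖z.2‖ ^ 2 < ε ^ 2 →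
      w1 k z = 0 ∧ w2 k z = 0) :
    ∃ H : ℂ × ℂ → ℂ, BddSmoothOn Ω H ∧
      (∀ z ∈ Ω, w1 0 z = -z.2 * d1bar H z) ∧
      (∀ z ∈ Ω, w1 1 z = -z.2 * d2bar H z) ∧
      (∀ z ∈ Ω, w2 0 z = z.1 * d1bar H z) ∧
      (∀ z ∈ Ω, w2 1 z = z.1 * d2bar H z) := by
  obtain ⟨ε, hε, hvan⟩ := hsupp
  have hg k : BddSmoothOn Ω (koszulQuotient (w1 k) (w2 k)) :=
    bddSmoothOn_koszulQuotient hε (hvan k) (hw1sm k) (hw2sm k)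
  have hcl : ∀ z ∈ Ω, d2bar (koszulQuotient (w1 0) (w2 0)) z =
      d1bar (koszulQuotient (w1 1) (w2 1)) z := fun z hz =>
    d2bar_koszulQuotient_eq_d1bar hopen hε (fun k => (hw1sm k).1) (fun k => (hw2sm k).1) htau
      hvan hw1cl hw2cl hz
  obtain ⟨H, hH, hH₁, hH₂⟩ := h1 _ _ (hg 0) (hg 1) hcl
  refine ⟨H, hH, fun z hz => ?_, fun z hz => ?_, fun z hz => ?_, fun z hz => ?_⟩
  · rw [hH₁ z hz, neg_snd_mul_koszulQuotient hε (htau 0) (hvan 0) hz]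
  · rw [hH₂ z hz, neg_snd_mul_koszulQuotient hε (htau 1) (hvan 1) hz]
  · rw [hH₁ z hz, fst_mul_koszulQuotient hε (htau 0) (hvan 0) hz]
  · rw [hH₂ z hz, fst_mul_koszulQuotient hε (htau 1) (hvan 1) hz]

/-- The `∂̄`-Koszul complex proposition in `ℂ²` (case `r = 1`, `s = 1`, `F = (z₁, z₂)`),
for bounded smooth data. -/
theorem koszul_dim_two_Linf (Ω : Set (ℂ × ℂ))
    (hopen : IsOpen Ω) (hconn : IsConnected Ω) (hbdd : Bornology.IsBounded Ω)
    (h0 : (0, 0) ∈ Ω) (h1 : H1 Ω) (h2 : H2 Ω)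
    (w1 w2 : Fin 2 → ℂ × ℂ → ℂ)
    (hw1sm : ∀ k, BddSmoothOn Ω (w1 k)) (hw2sm : ∀ k, BddSmoothOn Ω (w2 k))
    (hw1cl : ∀ z ∈ Ω, d2bar (w1 0) z = d1bar (w1 1) z)
    (hw2cl : ∀ z ∈ Ω, d2bar (w2 0) z = d1bar (w2 1) z)
    (htau : ∀ k, ∀ z ∈ Ω, z.1 * w1 k z + z.2 * w2 k z = 0)
    (hsupp : ∃ ε > 0, ∀ k, ∀ z ∈ Ω, ‖z.1‖ ^ 2 + ‖z.2‖ ^ 2 < ε ^ 2 →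
      w1 k z = 0 ∧ w2 k z = 0) :
    ∃ H : ℂ × ℂ → ℂ, BddSmoothOn Ω H ∧
      (∀ z ∈ Ω, w1 0 z = -z.2 * d1bar H z) ∧
      (∀ z ∈ Ω, w1 1 z = -z.2 * d2bar H z) ∧
      (∀ z ∈ Ω, w2 0 z = z.1 * d1bar H z) ∧
      (∀ z ∈ Ω, w2 1 z = z.1 * d2bar H z) :=
  koszul_dim_two_Linf_general Ω hopen h1 w1 w2 hw1sm hw2sm hw1cl hw2cl htau hsupp
end

section
/- Let Ω ⊂ ℂ² be a bounded domain containing the origin satisfying (S1) and (S2). Let w¹ = (w¹_1, w¹_2) and w² = (w²_1, w²_2) be pairs of functions Ω → ℂ smooth up to the boundary such that: (i) ∂w¹_1/∂z̄_2 = ∂w¹_2/∂z̄_1 and ∂w²_1/∂z̄_2 = ∂w²_2/∂z̄_1 on Ω; (ii) z_1 w¹_k + z_2 w²_k = 0 on Ω for k = 1, 2; (iii) there is ε > 0 such that all w¹_k, w²_k vanish on {z ∈ Ω : |z| < ε}. Then there exists a function H : Ω → ℂ smooth up to the boundary with w¹_k = −z_2 ∂H/∂z̄_k and w²_k = z_1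 ∂H/∂z̄_k on Ω for k = 1, 2. -/
/-- `f` is smooth up to the boundary of `Ω`: it agrees on `Ω` with a function that is
smooth on an open neighborhood of the closure of `Ω`. -/
def SmoothUpToBdry (Ω : Set (ℂ × ℂ)) (f : ℂ × ℂ → ℂ) : Prop :=
  ∃ (U : Set (ℂ × ℂ)) (F : ℂ × ℂ → ℂ), IsOpen U ∧ closure Ω ⊆ U ∧
    ContDiffOn ℝ (⊤ : ℕ∞) F U ∧ ∀ z ∈ Ω, f z = F z

/-- Hypothesis (S1): every `∂̄`-closed `(0,1)`-form on `Ω` with coefficients smooth up to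
the boundary is `∂̄u` for a function `u` smooth up to the boundary. -/
def S1 (Ω : Set (ℂ × ℂ)) : Prop :=
  ∀ β₁ β₂ : ℂ × ℂ → ℂ, SmoothUpToBdry Ω β₁ → SmoothUpToBdry Ω β₂ →
    (∀ z ∈ Ω, d2bar β₁ z = d1bar β₂ z) →
    ∃ u : ℂ × ℂ → ℂ, SmoothUpToBdry Ω u ∧
      (∀ z ∈ Ω, d1bar u z = β₁ z) ∧ (∀ z ∈ Ω, d2bar u z = β₂ z)

/-- Hypothesis (S2): every `(0,2)`-form on `Ω` with coefficient smooth up to the boundary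
is `∂̄` of a `(0,1)`-form with coefficients smooth up to the boundary. -/
def S2 (Ω : Set (ℂ × ℂ)) : Prop :=
  ∀ β : ℂ × ℂ → ℂ, SmoothUpToBdry Ω β →
    ∃ u₁ u₂ : ℂ × ℂ → ℂ, SmoothUpToBdry Ω u₁ ∧ SmoothUpToBdry Ω u₂ ∧
      ∀ z ∈ Ω, d1bar u₂ z - d2bar u₁ z = β z

/-!
Where `z₁ a + z₂ b = 0` and `z ≠ 0`, the function `g = (z̄₁ b - z̄₂ a) / |z|²` satisfies
`a = -z₂ g` and `b = z₁ g`; locally it is `b / z₁` or `-a / z₂`. As `wᵏ` vanishes near the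
origin, the singularity of `1 / |z|²` is harmless and `gₖ = g(w¹ₖ, w²ₖ)` is smooth up to the
boundary. Near each point `(g₁, g₂)` is a `∂̄`-closed form times one holomorphic function
(`1 / z₁`, `-1 / z₂`, or `0` near the origin), hence `∂̄`-closed, and (S1) gives `H` with `∂̄H = g`.
-/

open Complex Filter Metric Set Topology
open scoped ContDiff ComplexConjugate

section WirtingerDir

variable {E : Type*} [NormedAddCommGroup E] [NormedSpace ℂ E]

noncomputable def dbarDir (f : E → ℂ) (z v : E) : ℂ :=
  (1 / 2) * (fderiv ℝ f z v + I * fderiv ℝ f z (I • v))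

lemma Filter.EventuallyEq.dbarDir_eq {f g : E → ℂ} {z : E} (h : f =ᶠ[𝓝 z] g) (v : E) :
    dbarDir f z v = dbarDir g z v := by
  rw [dbarDir, dbarDir, h.fderiv_eq]

lemma dbarDir_mul_of_differentiableAt {f h : E → ℂ} {z : E} (hf : DifferentiableAt ℝ f z)
    (hh : DifferentiableAt ℂ h z) (v : E) :
    dbarDir (fun w => f w * h w) z v = dbarDir f z v * h z := by
  rw [dbarDir, dbarDir, fderiv_fun_mul hf (hh.restrictScalars ℝ), hh.fderiv_restrictScalars ℝ]
  simp only [add_apply, smul_apply,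
    ContinuousLinearMap.coe_restrictScalars', map_smul, smul_eq_mul]
  linear_combination f z * fderiv ℂ h z v / 2 * I_mul_I

end WirtingerDir

lemma d1bar_eq_dbarDir (f : ℂ × ℂ → ℂ) (z : ℂ × ℂ) : d1bar f z = dbarDir f z (1, 0) := by
  simp [d1bar, dbarDir]

lemma d2bar_eq_dbarDir (f : ℂ × ℂ → ℂ) (z : ℂ × ℂ) : d2bar f z = dbarDir f z (0, 1) := by
  simp [d2bar, dbarDir]

lemma d2bar_eq_d1bar_of_eventuallyEq_mul {g₀ g₁ f₀ f₁ h : ℂ × ℂ → ℂ} {z : ℂ × ℂ}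
    (hf₀ : DifferentiableAt ℝ f₀ z) (hf₁ : DifferentiableAt ℝ f₁ z)
    (hh : DifferentiableAt ℂ h z) (hg₀ : g₀ =ᶠ[𝓝 z] fun w => f₀ w * h w)
    (hg₁ : g₁ =ᶠ[𝓝 z] fun w => f₁ w * h w) (hf : d2bar f₀ z = d1bar f₁ z) :
    d2bar g₀ z = d1bar g₁ z := by
  rw [d2bar_eq_dbarDir, d1bar_eq_dbarDir] at hf ⊢
  rw [hg₀.dbarDir_eq, hg₁.dbarDir_eq, dbarDir_mul_of_differentiableAt hf₀ hh,
    dbarDir_mul_of_differentiableAt hf₁ hh, hf]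

lemma ContDiffBump.contDiff_one_sub_mul {F : Type*} [NormedAddCommGroup F] [NormedSpace ℝ F]
    [HasContDiffBump F] {c : F} (φ : ContDiffBump c) {h : F → ℂ} (hh : ContDiffOn ℝ ∞ h {c}ᶜ) :
    ContDiff ℝ ∞ (fun z => ((1 - φ z : ℝ) : ℂ) * h z) := by
  refine contDiff_iff_contDiffAt.2 fun x => ?_
  by_cases hx : x ∈ ball c φ.rIn
  · refine (contDiffAt_const (c := (0 : ℂ))).congr_of_eventuallyEq ?_
    filter_upwards [φ.eventuallyEq_one_of_mem_ball hx] with z hz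
    simp [hz]
  · have hxc : x ∈ ({c}ᶜ : Set F) := by
      rintro rfl
      exact hx (mem_ball_self φ.rIn_pos)
    exact (ofRealCLM.contDiff.comp (contDiff_const.sub φ.contDiff)).contDiffAt.mul
      (hh.contDiffAt (isOpen_compl_singleton.mem_nhds hxc))

namespace SmoothUpToBdry

variable {Ω : Set (ℂ × ℂ)} {f g : ℂ × ℂ → ℂ}

lemma contDiffOn (hf : SmoothUpToBdry Ω f) : ContDiffOn ℝ ∞ f Ω := by
  obtain ⟨U, F, -, hΩU, hF, hfF⟩ := hf
  exact (hF.mono (subset_closure.trans hΩU)).congr hfF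

lemma add (hf : SmoothUpToBdry Ω f) (hg : SmoothUpToBdry Ω g) :
    SmoothUpToBdry Ω (fun z => f z + g z) := by
  obtain ⟨U, F, hU, hΩU, hF, hfF⟩ := hf
  obtain ⟨V, G, hV, hΩV, hG, hgG⟩ := hg
  refine ⟨U ∩ V, fun z => F z + G z, hU.inter hV, subset_inter hΩU hΩV,
    (hF.mono inter_subset_left).add (hG.mono inter_subset_right), fun z hz => ?_⟩
  simp only [hfF z hz, hgG z hz]

lemma mul_of_eventuallyEq_zero {h : ℂ × ℂ → ℂ} (hf : SmoothUpToBdry Ω f)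
    (hh : ContDiffOn ℝ ∞ h {0}ᶜ) (hvan : f =ᶠ[𝓝[Ω] 0] 0) :
    SmoothUpToBdry Ω (fun z => h z * f z) := by
  obtain ⟨ε, hε, hfε⟩ := eventually_nhds_iff_ball.1 (eventually_nhdsWithin_iff.1 hvan)
  obtain ⟨U, F, hU, hΩU, hF, hfF⟩ := hf
  -- `1 - φ` removes the singularity of `h` at `0` and is `1` wherever `f` may be nonzero.
  let φ : ContDiffBump (0 : ℂ × ℂ) := ⟨ε / 2, ε, half_pos hε, half_lt_self hε⟩
  refine ⟨U, fun z => ((1 - φ z : ℝ) : ℂ) * h z * F z, hU, hΩU,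
    (φ.contDiff_one_sub_mul hh).contDiffOn.mul hF, fun z hz => ?_⟩
  dsimp only
  by_cases hzε : z ∈ ball 0 ε
  · have hfz : f z = 0 := hfε z hzε hz
    simp [hfz, ← hfF z hz]
  · rw [φ.zero_of_le_dist (not_lt.1 hzε), ← hfF z hz]
    simp

end SmoothUpToBdry

lemma conj_mul_add_conj_mul_ne_zero {z : ℂ × ℂ} (hz : z ≠ 0) :
    conj z.1 * z.1 + conj z.2 * z.2 ≠ 0 := by
  rw [conj_mul', conj_mul', ← ofReal_pow, ← ofReal_pow, ← ofReal_add, ofReal_ne_zero]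
  intro h
  rw [add_eq_zero_iff_of_nonneg (by positivity) (by positivity)] at h
  exact hz (Prod.ext (by simpa using h.1) (by simpa using h.2))

lemma contDiffOn_mul_inv_conj_mul_add_conj_mul {c : ℂ × ℂ → ℂ} (hc : ContDiff ℝ ∞ c) :
    ContDiffOn ℝ ∞ (fun z => c z * (conj z.1 * z.1 + conj z.2 * z.2)⁻¹) {0}ᶜ := by
  have hq : ContDiff ℝ ∞ (fun z : ℂ × ℂ => conj z.1 * z.1 + conj z.2 * z.2) := by
    have hconj : ContDiff ℝ ∞ (conj : ℂ → ℂ) := conjCLE.contDiff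
    exact ((hconj.comp contDiff_fst).mul contDiff_fst).add
      ((hconj.comp contDiff_snd).mul contDiff_snd)
  exact hc.contDiffOn.mul (hq.contDiffOn.inv fun z hz => conj_mul_add_conj_mul_ne_zero hz)

noncomputable def koszulQuot (a b : ℂ × ℂ → ℂ) (z : ℂ × ℂ) : ℂ :=
  (conj z.1 * b z - conj z.2 * a z) / (conj z.1 * z.1 + conj z.2 * z.2)

lemma mul_koszulQuot {a b : ℂ × ℂ → ℂ} {z : ℂ × ℂ} (hz : z ≠ 0)
    (hrel : z.1 * a z + z.2 * b z = 0) :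
    z.1 * koszulQuot a b z = b z ∧ z.2 * koszulQuot a b z = -a z := by
  have hq := conj_mul_add_conj_mul_ne_zero hz
  constructor
  · rw [koszulQuot, mul_div_assoc', div_eq_iff hq]
    linear_combination (-conj z.2) * hrel
  · rw [koszulQuot, mul_div_assoc', div_eq_iff hq]
    linear_combination conj z.1 * hrel

lemma koszulQuot_eventuallyEq_zero {a b : ℂ × ℂ → ℂ} {z : ℂ × ℂ} (ha : a =ᶠ[𝓝 z] 0)
    (hb : b =ᶠ[𝓝 z] 0) : koszulQuot a b =ᶠ[𝓝 z] 0 := by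
  filter_upwards [ha, hb] with w haw hbw
  simp [koszulQuot, haw, hbw]

lemma smoothUpToBdry_koszulQuot {Ω : Set (ℂ × ℂ)} {a b : ℂ × ℂ → ℂ} (ha : SmoothUpToBdry Ω a)
    (hb : SmoothUpToBdry Ω b) (ha₀ : a =ᶠ[𝓝[Ω] 0] 0) (hb₀ : b =ᶠ[𝓝[Ω] 0] 0) :
    SmoothUpToBdry Ω (koszulQuot a b) := by
  have hsplit : koszulQuot a b = fun z =>
      (conj z.1 * (conj z.1 * z.1 + conj z.2 * z.2)⁻¹) * b z +
        (-conj z.2 * (conj z.1 * z.1 + conj z.2 * z.2)⁻¹) * a z := by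
    ext z
    rw [koszulQuot]
    ring
  rw [hsplit]
  exact (hb.mul_of_eventuallyEq_zero (contDiffOn_mul_inv_conj_mul_add_conj_mul
    (conjCLE.contDiff.comp contDiff_fst)) hb₀).add
    (ha.mul_of_eventuallyEq_zero (contDiffOn_mul_inv_conj_mul_add_conj_mul
    (conjCLE.contDiff.comp contDiff_snd).neg) ha₀)

lemma eq_mul_koszulQuot {Ω : Set (ℂ × ℂ)} {a b : ℂ × ℂ → ℂ}
    (hrel : ∀ z ∈ Ω, z.1 * a z + z.2 * b z = 0) (ha₀ : a =ᶠ[𝓝[Ω] 0] 0) (hb₀ : b =ᶠ[𝓝[Ω] 0] 0)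
    {z : ℂ × ℂ} (hz : z ∈ Ω) : a z = -z.2 * koszulQuot a b z ∧ b z = z.1 * koszulQuot a b z := by
  rcases eq_or_ne z 0 with rfl | hz₀
  · simp [ha₀.self_of_nhdsWithin hz, hb₀.self_of_nhdsWithin hz]
  · obtain ⟨h₁, h₂⟩ := mul_koszulQuot hz₀ (hrel z hz)
    exact ⟨by rw [neg_mul, h₂, neg_neg], h₁.symm⟩

lemma d2bar_koszulQuot_eq_d1bar {Ω : Set (ℂ × ℂ)} (hΩ : IsOpen Ω) {a b : Fin 2 → ℂ × ℂ → ℂ}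
    (ha : ∀ k, DifferentiableOn ℝ (a k) Ω) (hb : ∀ k, DifferentiableOn ℝ (b k) Ω)
    (hacl : ∀ z ∈ Ω, d2bar (a 0) z = d1bar (a 1) z)
    (hbcl : ∀ z ∈ Ω, d2bar (b 0) z = d1bar (b 1) z)
    (hrel : ∀ k, ∀ z ∈ Ω, z.1 * a k z + z.2 * b k z = 0)
    (ha₀ : ∀ k, a k =ᶠ[𝓝[Ω] 0] 0) (hb₀ : ∀ k, b k =ᶠ[𝓝[Ω] 0] 0) {z : ℂ × ℂ} (hz : z ∈ Ω) :
    d2bar (koszulQuot (a 0) (b 0)) z = d1bar (koszulQuot (a 1) (b 1)) z := by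
  have hΩz : Ω ∈ 𝓝 z := hΩ.mem_nhds hz
  have hda : ∀ k, DifferentiableAt ℝ (a k) z := fun k => (ha k).differentiableAt hΩz
  have hdb : ∀ k, DifferentiableAt ℝ (b k) z := fun k => (hb k).differentiableAt hΩz
  rcases eq_or_ne z 0 with rfl | hz₀
  · have hnhds : 𝓝[Ω] (0 : ℂ × ℂ) = 𝓝 0 := nhdsWithin_eq_nhds.2 hΩz
    have hq : ∀ k, koszulQuot (a k) (b k) =ᶠ[𝓝 0] fun w => a k w * 0 := fun k => by
      filter_upwards [koszulQuot_eventuallyEq_zero (hnhds ▸ ha₀ k) (hnhds ▸ hb₀ k)] with w hw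
      simp [hw]
    exact d2bar_eq_d1bar_of_eventuallyEq_mul (hda 0) (hda 1) (differentiableAt_const 0)
      (hq 0) (hq 1) (hacl 0 hz)
  obtain hz₁ | hz₂ : z.1 ≠ 0 ∨ z.2 ≠ 0 := by
    rw [← not_and_or, ← Prod.mk_eq_zero]
    exact hz₀
  · have hq : ∀ k, koszulQuot (a k) (b k) =ᶠ[𝓝 z] fun w => b k w * (w.1)⁻¹ := fun k => by
      filter_upwards [hΩz, continuous_fst.continuousAt.eventually_ne hz₁] with w hwΩ hw₁
      have hw₀ : w ≠ 0 := fun hw => hw₁ (by simp [hw])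
      rw [eq_mul_inv_iff_mul_eq₀ hw₁, mul_comm, (mul_koszulQuot hw₀ (hrel k w hwΩ)).1]
    exact d2bar_eq_d1bar_of_eventuallyEq_mul (hdb 0) (hdb 1) (differentiableAt_fst.inv hz₁)
      (hq 0) (hq 1) (hbcl z hz)
  · have hq : ∀ k, koszulQuot (a k) (b k) =ᶠ[𝓝 z] fun w => a k w * -(w.2)⁻¹ := fun k => by
      filter_upwards [hΩz, continuous_snd.continuousAt.eventually_ne hz₂] with w hwΩ hw₂
      have hw₀ : w ≠ 0 := fun hw => hw₂ (by simp [hw])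
      rw [mul_neg, ← neg_mul, eq_mul_inv_iff_mul_eq₀ hw₂, mul_comm,
        (mul_koszulQuot hw₀ (hrel k w hwΩ)).2]
    exact d2bar_eq_d1bar_of_eventuallyEq_mul (hda 0) (hda 1) (differentiableAt_snd.inv hz₂).neg
      (hq 0) (hq 1) (hacl z hz)

lemma eventuallyEq_zero_of_sq_norm_add_sq_norm_lt {Ω : Set (ℂ × ℂ)} {f : ℂ × ℂ → ℂ} {ε : ℝ}
    (hε : 0 < ε) (hf : ∀ z ∈ Ω, ‖z.1‖ ^ 2 + ‖z.2‖ ^ 2 < ε ^ 2 → f z = 0) :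
    f =ᶠ[𝓝[Ω] 0] 0 := by
  have hball : {z : ℂ × ℂ | ‖z.1‖ ^ 2 + ‖z.2‖ ^ 2 < ε ^ 2} ∈ 𝓝 0 :=
    (isOpen_lt (by fun_prop) continuous_const).mem_nhds (by simpa using pow_pos hε 2)
  filter_upwards [self_mem_nhdsWithin, mem_nhdsWithin_of_mem_nhds hball] with z hzΩ hzε
  exact hf z hzΩ hzε

theorem koszul_dim_two_smooth_up_to_boundary_general (Ω : Set (ℂ × ℂ))
    (hopen : IsOpen Ω) (h1 : S1 Ω)
    (w1 w2 : Fin 2 → ℂ × ℂ → ℂ)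
    (hw1sm : ∀ k, SmoothUpToBdry Ω (w1 k)) (hw2sm : ∀ k, SmoothUpToBdry Ω (w2 k))
    (hw1cl : ∀ z ∈ Ω, d2bar (w1 0) z = d1bar (w1 1) z)
    (hw2cl : ∀ z ∈ Ω, d2bar (w2 0) z = d1bar (w2 1) z)
    (htau : ∀ k, ∀ z ∈ Ω, z.1 * w1 k z + z.2 * w2 k z = 0)
    (hsupp : ∃ ε > 0, ∀ k, ∀ z ∈ Ω, ‖z.1‖ ^ 2 + ‖z.2‖ ^ 2 < ε ^ 2 →
      w1 k z = 0 ∧ w2 k z = 0) :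
    ∃ H : ℂ × ℂ → ℂ, SmoothUpToBdry Ω H ∧
      (∀ z ∈ Ω, w1 0 z = -z.2 * d1bar H z) ∧
      (∀ z ∈ Ω, w1 1 z = -z.2 * d2bar H z) ∧
      (∀ z ∈ Ω, w2 0 z = z.1 * d1bar H z) ∧
      (∀ z ∈ Ω, w2 1 z = z.1 * d2bar H z) := by
  have hvan : ∀ k, w1 k =ᶠ[𝓝[Ω] 0] 0 ∧ w2 k =ᶠ[𝓝[Ω] 0] 0 := by
    obtain ⟨ε, hε, hsupp⟩ := hsupp
    exact fun k => ⟨eventuallyEq_zero_of_sq_norm_add_sq_norm_lt hε fun z hz h => (hsupp k z hz h).1,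
      eventuallyEq_zero_of_sq_norm_add_sq_norm_lt hε fun z hz h => (hsupp k z hz h).2⟩
  have hsm : ∀ k, SmoothUpToBdry Ω (koszulQuot (w1 k) (w2 k)) := fun k =>
    smoothUpToBdry_koszulQuot (hw1sm k) (hw2sm k) (hvan k).1 (hvan k).2
  have hcl : ∀ z ∈ Ω, d2bar (koszulQuot (w1 0) (w2 0)) z = d1bar (koszulQuot (w1 1) (w2 1)) z :=
    fun z hz => d2bar_koszulQuot_eq_d1bar hopen (fun k => (hw1sm k).contDiffOn.differentiableOn
      (by simp)) (fun k => (hw2sm k).contDiffOn.differentiableOn (by simp)) hw1cl hw2cl htau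
      (fun k => (hvan k).1) (fun k => (hvan k).2) hz
  obtain ⟨H, hH, hH₁, hH₂⟩ := h1 _ _ (hsm 0) (hsm 1) hcl
  have hfac := fun k (z) (hz : z ∈ Ω) => eq_mul_koszulQuot (htau k) (hvan k).1 (hvan k).2 hz
  refine ⟨H, hH, fun z hz => ?_, fun z hz => ?_, fun z hz => ?_, fun z hz => ?_⟩
  · rw [hH₁ z hz]; exact (hfac 0 z hz).1
  · rw [hH₂ z hz]; exact (hfac 1 z hz).1
  · rw [hH₁ z hz]; exact (hfac 0 z hz).2
  · rw [hH₂ z hz]; exact (hfac 1 z hz).2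

/-- The `∂̄`-Koszul complex proposition in `ℂ²` (case `r = 1`, `s = 1`, `F = (z₁, z₂)`),
for data smooth up to the boundary. -/
theorem koszul_dim_two_smooth_up_to_boundary (Ω : Set (ℂ × ℂ))
    (hopen : IsOpen Ω) (hconn : IsConnected Ω) (hbdd : Bornology.IsBounded Ω)
    (h0 : (0, 0) ∈ Ω) (h1 : S1 Ω) (h2 : S2 Ω)
    (w1 w2 : Fin 2 → ℂ × ℂ → ℂ)
    (hw1sm : ∀ k, SmoothUpToBdry Ω (w1 k)) (hw2sm : ∀ k, SmoothUpToBdry Ω (w2 k))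
    (hw1cl : ∀ z ∈ Ω, d2bar (w1 0) z = d1bar (w1 1) z)
    (hw2cl : ∀ z ∈ Ω, d2bar (w2 0) z = d1bar (w2 1) z)
    (htau : ∀ k, ∀ z ∈ Ω, z.1 * w1 k z + z.2 * w2 k z = 0)
    (hsupp : ∃ ε > 0, ∀ k, ∀ z ∈ Ω, ‖z.1‖ ^ 2 + ‖z.2‖ ^ 2 < ε ^ 2 →
      w1 k z = 0 ∧ w2 k z = 0) :
    ∃ H : ℂ × ℂ → ℂ, SmoothUpToBdry Ω H ∧
      (∀ z ∈ Ω, w1 0 z = -z.2 * d1bar H z) ∧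
      (∀ z ∈ Ω, w1 1 z = -z.2 * d2bar H z) ∧
      (∀ z ∈ Ω, w2 0 z = z.1 * d1bar H z) ∧
      (∀ z ∈ Ω, w2 1 z = z.1 * d2bar H z) :=
  koszul_dim_two_smooth_up_to_boundary_general Ω hopen h1 w1 w2 hw1sm hw2sm hw1cl hw2cl htau hsupp
end
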